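/- arXiv:1901.08061 — 2 statements merged into one kernel-verified Lean document; each statement's English description precedes it below -/
import Mathlib

section
/- Let L ≥ 2. The ZMod 2-linear map sending a Z-error E : V × Fin 3 → ZMod 2 to its vertex syndrome σ_A(E) : V → ZMod 2 has rank L³ − 3L + 2; equivalently, its image is exactly the subspace of configurations d : V → ZMod 2 whose sum over every axis-aligned lattice plane {v : v_i = a} vanishes, and this subspace has ZMod 2-dimension L³ − 3L + 2. (The L³ vertex stabilizers of the X-cube model satisfy exactly 3L − 2 independent relations, all generated by the planar materialized symmetries.) -/
set_option linter.unusedSectionVars false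
set_option linter.unnecessarySimpa false
set_option maxHeartbeats 1000000


/-- Positions on the periodic cubic lattice of linear size `L`. -/
abbrev V (L : ℕ) : Type := Fin 3 → ZMod L

/-- The standard basis vector in direction `i`. -/
def e (L : ℕ) (i : Fin 3) : V L := Pi.single i 1

/-- The two directions/colors different from a given one. -/
def oth : Fin 3 → Fin 3 × Fin 3 := ![(1, 2), (0, 2), (0, 1)]

/-- The `c`-colored cell syndrome of an X-error `F` at the cell `p`. -/
def cellSyn (L : ℕ) (F : V L × Fin 3 → ZMod 2) (c : Fin 3) (p : V L) : ZMod 2 :=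
  ∑ i ∈ Finset.univ.filter (fun i : Fin 3 => i ≠ c), (F (p, i) + F (p + e L i, i))

/-- The vertex syndrome of a Z-error `E` at the vertex `v`. -/
def vertSyn (L : ℕ) (E : V L × Fin 3 → ZMod 2) (v : V L) : ZMod 2 :=
  ∑ i : Fin 3, ∑ a : Fin 2, ∑ b : Fin 2,
    E (v - ((a : ℕ) : ZMod L) • e L (oth i).1 - ((b : ℕ) : ZMod L) • e L (oth i).2, i)

/-- The vertex syndrome map as a `ZMod 2`-linear map. -/
def vertSynMap (L : ℕ) : (V L × Fin 3 → ZMod 2) →ₗ[ZMod 2] (V L → ZMod 2) where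
  toFun E := vertSyn L E
  map_add' E E' := by
    funext v
    simp [vertSyn, Finset.sum_add_distrib]
  map_smul' c E := by
    funext v
    simp [vertSyn, Finset.smul_sum, Finset.mul_sum, mul_add]


section Aux
variable {L : ℕ} [NeZero L]

variable {L : ℕ} [NeZero L]

lemma two_mul_z : ∀ x : ZMod 2, x + x = 0 := by decide

lemma sum_range_L (f : ZMod L → ZMod 2) :
    ∑ k ∈ Finset.range L, f (k : ZMod L) = ∑ a : ZMod L, f a := by
  refine Finset.sum_nbij' (i := fun k => (k : ZMod L)) (j := fun a => a.val) ?_ ?_ ?_ ?_ ?_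
  · intro a _; exact Finset.mem_univ _
  · intro a _; exact Finset.mem_range.2 (ZMod.val_lt a)
  · intro a ha; exact ZMod.val_cast_of_lt (Finset.mem_range.1 ha)
  · intro a _; simp [ZMod.natCast_val, ZMod.cast_id]
  · intro a _; rfl

/-- partial sums -/
def psum (f : ZMod L → ZMod 2) (a : ZMod L) : ZMod 2 :=
  ∑ k ∈ Finset.range (a.val + 1), f (k : ZMod L)

lemma psum_telescope (f : ZMod L → ZMod 2) (hf : ∑ a : ZMod L, f a = 0) (a : ZMod L) :
    psum f a + psum f (a - 1) = f a := by
  by_cases h : a = 0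
  · subst h
    have h1 : ((0 : ZMod L) - 1).val = L - 1 := by
      obtain ⟨n, rfl⟩ : ∃ n, L = n + 1 := ⟨L - 1, (Nat.succ_pred_eq_of_pos (NeZero.pos L)).symm⟩
      simpa using ZMod.val_neg_one n
    have h2 : psum f (0 - 1) = 0 := by
      have hL1 : L - 1 + 1 = L := Nat.succ_pred_eq_of_pos (NeZero.pos L)
      rw [psum, h1, hL1, sum_range_L, hf]
    rw [h2, psum]
    simp [ZMod.val_zero]
  · have hv : a.val ≠ 0 := fun hh => h ((ZMod.val_eq_zero a).1 hh)
    have ha1 : ((a.val - 1 : ℕ) : ZMod L) = a - 1 := by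
      rw [Nat.cast_sub (Nat.one_le_iff_ne_zero.2 hv), Nat.cast_one, ZMod.natCast_val,
        ZMod.cast_id]
    have hval : (a - 1).val = a.val - 1 := by
      rw [← ha1, ZMod.val_cast_of_lt]
      exact lt_of_le_of_lt (Nat.sub_le _ _) (ZMod.val_lt a)
    have hs : a.val - 1 + 1 = a.val := Nat.succ_pred_eq_of_pos (Nat.pos_of_ne_zero hv)
    rw [psum, psum, hval, hs]
    have h5 : a.val + 1 = (a.val - 1 + 1) + 1 := by omega
    rw [h5, Finset.sum_range_succ, hs]
    have hc : ((a.val : ℕ) : ZMod L) = a := by simp [ZMod.natCast_val, ZMod.cast_id]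
    rw [hc, add_comm, ← add_assoc, two_mul_z, zero_add]

lemma psum_sum_comm {ι : Type*} (s : Finset ι) (F : ι → ZMod L → ZMod 2) (a : ZMod L) :
    psum (fun x => ∑ y ∈ s, F y x) a = ∑ y ∈ s, psum (F y) a := by
  rw [psum, Finset.sum_comm]; rfl

lemma psum_congr (f g : ZMod L → ZMod 2) (h : ∀ x, f x = g x) (a : ZMod L) :
    psum f a = psum g a := by
  unfold psum; exact Finset.sum_congr rfl fun k _ => h _

lemma psum_zero (f : ZMod L → ZMod 2) (h : ∀ x, f x = 0) (a : ZMod L) : psum f a = 0 := by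
  unfold psum; simp [h]


variable {L : ℕ} [NeZero L]

lemma eta3 (v : V L) : ![v 0, v 1, v 2] = v := by
  funext t; fin_cases t <;> simp

lemma e_apply (i t : Fin 3) : e L i t = if t = i then 1 else 0 := by
  simp [e, Pi.single_apply]

lemma planeSum0 (f : V L → ZMod 2) (a : ZMod L) :
    ∑ v ∈ Finset.univ.filter (fun v : V L => v 0 = a), f v
      = ∑ b : ZMod L, ∑ c : ZMod L, f ![a, b, c] := by
  rw [show (∑ b : ZMod L, ∑ c : ZMod L, f ![a, b, c])
      = ∑ p : ZMod L × ZMod L, f ![a, p.1, p.2] from (Fintype.sum_prod_type (fun p : ZMod L × ZMod L => f ![a, p.1, p.2])).symm]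
  refine Finset.sum_nbij' (i := fun v => (v 1, v 2)) (j := fun p => ![a, p.1, p.2])
    ?_ ?_ ?_ ?_ ?_
  · intro v _; exact Finset.mem_univ _
  · intro p _; simp
  · intro v hv
    have h0 : v 0 = a := (Finset.mem_filter.1 hv).2
    funext t; fin_cases t <;> simp [h0]
  · intro p _; simp
  · intro v hv
    have h0 : v 0 = a := (Finset.mem_filter.1 hv).2
    congr 1
    funext t; fin_cases t <;> simp [h0]

lemma planeSum1 (f : V L → ZMod 2) (b : ZMod L) :
    ∑ v ∈ Finset.univ.filter (fun v : V L => v 1 = b), f v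
      = ∑ a : ZMod L, ∑ c : ZMod L, f ![a, b, c] := by
  rw [show (∑ a : ZMod L, ∑ c : ZMod L, f ![a, b, c])
      = ∑ p : ZMod L × ZMod L, f ![p.1, b, p.2] from (Fintype.sum_prod_type (fun p : ZMod L × ZMod L => f ![p.1, b, p.2])).symm]
  refine Finset.sum_nbij' (i := fun v => (v 0, v 2)) (j := fun p => ![p.1, b, p.2])
    ?_ ?_ ?_ ?_ ?_
  · intro v _; exact Finset.mem_univ _
  · intro p _; simp
  · intro v hv
    have h0 : v 1 = b := (Finset.mem_filter.1 hv).2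
    funext t; fin_cases t <;> simp [h0]
  · intro p _; simp
  · intro v hv
    have h0 : v 1 = b := (Finset.mem_filter.1 hv).2
    congr 1
    funext t; fin_cases t <;> simp [h0]

lemma planeSum2 (f : V L → ZMod 2) (c : ZMod L) :
    ∑ v ∈ Finset.univ.filter (fun v : V L => v 2 = c), f v
      = ∑ a : ZMod L, ∑ b : ZMod L, f ![a, b, c] := by
  rw [show (∑ a : ZMod L, ∑ b : ZMod L, f ![a, b, c])
      = ∑ p : ZMod L × ZMod L, f ![p.1, p.2, c] from (Fintype.sum_prod_type (fun p : ZMod L × ZMod L => f ![p.1, p.2, c])).symm]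
  refine Finset.sum_nbij' (i := fun v => (v 0, v 1)) (j := fun p => ![p.1, p.2, c])
    ?_ ?_ ?_ ?_ ?_
  · intro v _; exact Finset.mem_univ _
  · intro p _; simp
  · intro v hv
    have h0 : v 2 = c := (Finset.mem_filter.1 hv).2
    funext t; fin_cases t <;> simp [h0]
  · intro p _; simp
  · intro v hv
    have h0 : v 2 = c := (Finset.mem_filter.1 hv).2
    congr 1
    funext t; fin_cases t <;> simp [h0]

/-- shifting a plane sum -/
lemma planeSum_shift (f : V L → ZMod 2) (i : Fin 3) (a : ZMod L) (t : V L) :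
    ∑ v ∈ Finset.univ.filter (fun v : V L => v i = a), f (v - t)
      = ∑ w ∈ Finset.univ.filter (fun w : V L => w i = a - t i), f w := by
  refine Finset.sum_nbij' (i := fun v => v - t) (j := fun w => w + t) ?_ ?_ ?_ ?_ ?_
  · intro v hv
    have := (Finset.mem_filter.1 hv).2
    simp only [Finset.mem_filter, Finset.mem_univ, true_and, Pi.sub_apply]
    rw [this]
  · intro w hw
    have := (Finset.mem_filter.1 hw).2
    simp only [Finset.mem_filter, Finset.mem_univ, true_and, Pi.add_apply]
    rw [this]; ring
  · intro v _; simp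
  · intro w _; simp
  · intro v _; rfl


variable {L : ℕ} [NeZero L]




lemma quad_zero (E : V L × Fin 3 → ZMod 2) (c j k i : Fin 3) (a : ZMod L)
    (h : (e L j i = 0 ∧ e L k i = 0) ∨ (e L j i = 1 ∧ e L k i = 0) ∨
      (e L j i = 0 ∧ e L k i = 1)) :
    ∑ v ∈ Finset.univ.filter (fun v : V L => v i = a), ∑ x : Fin 2, ∑ y : Fin 2,
      E (v - ((x : ℕ) : ZMod L) • e L j - ((y : ℕ) : ZMod L) • e L k, c) = 0 := by
  have hswap : ∑ v ∈ Finset.univ.filter (fun v : V L => v i = a), ∑ x : Fin 2, ∑ y : Fin 2,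
      E (v - ((x : ℕ) : ZMod L) • e L j - ((y : ℕ) : ZMod L) • e L k, c)
      = ∑ x : Fin 2, ∑ y : Fin 2, ∑ v ∈ Finset.univ.filter (fun v : V L => v i = a),
        E (v - ((x : ℕ) : ZMod L) • e L j - ((y : ℕ) : ZMod L) • e L k, c) :=
    Finset.sum_comm.trans (Finset.sum_congr rfl fun x _ => Finset.sum_comm)
  rw [hswap]
  have hs : ∀ x y : Fin 2,
      ∑ v ∈ Finset.univ.filter (fun v : V L => v i = a),
        E (v - ((x : ℕ) : ZMod L) • e L j - ((y : ℕ) : ZMod L) • e L k, c)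
      = ∑ w ∈ Finset.univ.filter (fun w : V L =>
          w i = a - ((x : ℕ) : ZMod L) * e L j i - ((y : ℕ) : ZMod L) * e L k i),
          E (w, c) := by
    intro x y
    simp only [sub_sub]
    rw [planeSum_shift (fun w => E (w, c)) i a
      (((x : ℕ) : ZMod L) • e L j + ((y : ℕ) : ZMod L) • e L k)]
    simp [Pi.add_apply, smul_eq_mul]
  simp only [Fin.sum_univ_two, hs]
  rcases h with ⟨h1, h2⟩ | ⟨h1, h2⟩ | ⟨h1, h2⟩ <;>
    simp [h1, h2, two_mul_z]

lemma vertSyn_plane (E : V L × Fin 3 → ZMod 2) (i : Fin 3) (a : ZMod L) :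
    ∑ v ∈ Finset.univ.filter (fun v : V L => v i = a), vertSyn L E v = 0 := by
  unfold vertSyn
  rw [Finset.sum_comm, Fin.sum_univ_three]
  simp only [oth, Matrix.cons_val_zero, Matrix.cons_val_one, Matrix.head_cons,
    Matrix.cons_val_two, Matrix.tail_cons]
  fin_cases i <;>
    rw [quad_zero E 0 1 2 _ a (by simp [e_apply]; try decide),
        quad_zero E 1 0 2 _ a (by simp [e_apply]; try decide),
        quad_zero E 2 0 1 _ a (by simp [e_apply]; try decide)] <;> simp


end Aux

namespace Constr

variable {L : ℕ} [NeZero L]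

variable (D : ZMod L → ZMod L → ZMod L → ZMod 2)

def rr (b c : ZMod L) : ZMod 2 := ∑ a : ZMod L, D a b c
def qq (b c : ZMod L) : ZMod 2 := psum (fun c' => rr D b c') c
def ee (b c : ZMod L) : ZMod 2 := psum (fun b' => qq D b' c) b
def Dp (a b c : ZMod L) : ZMod 2 := D a b c + (if a = 0 then rr D b c else 0)
def gg (a b c : ZMod L) : ZMod 2 := psum (fun a' => Dp D a' b c) a
def ss (a b : ZMod L) : ZMod 2 := ∑ c : ZMod L, gg D a b c
def F2 (a b c : ZMod L) : ZMod 2 := if c = 0 then psum (ss D a) b else 0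
def hh (a b c : ZMod L) : ZMod 2 := gg D a b c + (if c = 0 then ss D a b else 0)
def F1 (a b c : ZMod L) : ZMod 2 := psum (hh D a b) c

variable (hd0 : ∀ a, ∑ b : ZMod L, ∑ c : ZMod L, D a b c = 0)
variable (hd1 : ∀ b, ∑ a : ZMod L, ∑ c : ZMod L, D a b c = 0)
variable (hd2 : ∀ c, ∑ a : ZMod L, ∑ b : ZMod L, D a b c = 0)
include hd0 hd1 hd2

lemma hr1 (b : ZMod L) : ∑ c : ZMod L, rr D b c = 0 := by
  unfold rr; rw [Finset.sum_comm]; exact hd1 b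

lemma hr2 (c : ZMod L) : ∑ b : ZMod L, rr D b c = 0 := by
  unfold rr; rw [Finset.sum_comm]; exact hd2 c

lemma hq (b c : ZMod L) : qq D b c + qq D b (c - 1) = rr D b c :=
  psum_telescope _ (hr1 D hd0 hd1 hd2 b) c

lemma he_half (b c : ZMod L) : ee D b c + ee D (b - 1) c = qq D b c := by
  refine psum_telescope (fun b' => qq D b' c) ?_ b
  have : ∀ b' : ZMod L, True := fun _ => trivial
  calc ∑ b' : ZMod L, qq D b' c = psum (fun c' => ∑ b' : ZMod L, rr D b' c') c := by
        rw [psum_sum_comm]; rfl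
    _ = 0 := psum_zero _ (fun c' => hr2 D hd0 hd1 hd2 c') c

lemma he (b c : ZMod L) :
    ee D b c + ee D (b - 1) c + (ee D b (c - 1) + ee D (b - 1) (c - 1)) = rr D b c := by
  rw [he_half D hd0 hd1 hd2 b c, he_half D hd0 hd1 hd2 b (c - 1), hq D hd0 hd1 hd2 b c]

/-- ite version -/
lemma he' (a b c : ZMod L) :
    (if a = 0 then ee D b c else 0) + (if a = 0 then ee D (b - 1) c else 0)
      + ((if a = 0 then ee D b (c - 1) else 0) + (if a = 0 then ee D (b - 1) (c - 1) else 0))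
      = (if a = 0 then rr D b c else 0) := by
  by_cases h : a = 0
  · simp only [h, if_true]; exact he D hd0 hd1 hd2 b c
  · simp [h]

lemma hDp_line (b c : ZMod L) : ∑ a : ZMod L, Dp D a b c = 0 := by
  unfold Dp
  rw [Finset.sum_add_distrib, Finset.sum_ite_eq' Finset.univ (0 : ZMod L) (fun _ => rr D b c)]
  simp only [Finset.mem_univ, if_true]
  exact two_mul_z (rr D b c)

lemma hDp_plane (a : ZMod L) : ∑ b : ZMod L, ∑ c : ZMod L, Dp D a b c = 0 := by
  unfold Dp
  have : ∑ b : ZMod L, ∑ c : ZMod L, (D a b c + (if a = 0 then rr D b c else 0))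
      = (∑ b : ZMod L, ∑ c : ZMod L, D a b c)
        + ∑ b : ZMod L, ∑ c : ZMod L, (if a = 0 then rr D b c else 0) := by
    rw [← Finset.sum_add_distrib]
    exact Finset.sum_congr rfl fun b _ => by rw [← Finset.sum_add_distrib]
  rw [this, hd0 a, zero_add]
  by_cases h : a = 0
  · simp only [h, if_true]
    calc ∑ b : ZMod L, ∑ c : ZMod L, rr D b c = ∑ b : ZMod L, (0 : ZMod 2) :=
          Finset.sum_congr rfl fun b _ => hr1 D hd0 hd1 hd2 b
      _ = 0 := by simp
  · simp [h]

lemma hg (a b c : ZMod L) : gg D a b c + gg D (a - 1) b c = Dp D a b c :=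
  psum_telescope _ (hDp_line D hd0 hd1 hd2 b c) a

lemma hs (a : ZMod L) : ∑ b : ZMod L, ss D a b = 0 := by
  unfold ss gg
  calc ∑ b : ZMod L, ∑ c : ZMod L, psum (fun a' => Dp D a' b c) a
      = ∑ b : ZMod L, psum (fun a' => ∑ c : ZMod L, Dp D a' b c) a :=
        Finset.sum_congr rfl fun b _ => (psum_sum_comm Finset.univ (fun c a' => Dp D a' b c) a).symm
    _ = psum (fun a' => ∑ b : ZMod L, ∑ c : ZMod L, Dp D a' b c) a :=
        (psum_sum_comm Finset.univ (fun b a' => ∑ c : ZMod L, Dp D a' b c) a).symm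
    _ = 0 := psum_zero _ (fun a' => hDp_plane D hd0 hd1 hd2 a') a

lemma hF2 (a b c : ZMod L) :
    F2 D a b c + F2 D a (b - 1) c = (if c = 0 then ss D a b else 0) := by
  unfold F2
  by_cases h : c = 0
  · simp only [h, if_true]
    exact psum_telescope _ (hs D hd0 hd1 hd2 a) b
  · simp [h]

lemma hh_line (a b : ZMod L) : ∑ c : ZMod L, hh D a b c = 0 := by
  unfold hh
  rw [Finset.sum_add_distrib, Finset.sum_ite_eq' Finset.univ (0 : ZMod L) (fun _ => ss D a b)]
  simp only [Finset.mem_univ, if_true]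
  show ss D a b + ss D a b = 0
  exact two_mul_z _

lemma hF1 (a b c : ZMod L) : F1 D a b c + F1 D a b (c - 1) = hh D a b c :=
  psum_telescope _ (hh_line D hd0 hd1 hd2 a b) c

lemma hh_def (a b c : ZMod L) : hh D a b c = gg D a b c + (if c = 0 then ss D a b else 0) := rfl

lemma Dp_def (a b c : ZMod L) : Dp D a b c = D a b c + (if a = 0 then rr D b c else 0) := rfl

/-- The master algebraic identity. -/
lemma master (a b c : ZMod L) :
    ((if a = 0 then ee D b c else 0) + (if a = 0 then ee D (b - 1) c else 0)
      + ((if a = 0 then ee D b (c - 1) else 0) + (if a = 0 then ee D (b - 1) (c - 1) else 0)))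
    + (F1 D a b c + F1 D a b (c - 1) + (F1 D (a - 1) b c + F1 D (a - 1) b (c - 1)))
    + (F2 D a b c + F2 D a (b - 1) c + (F2 D (a - 1) b c + F2 D (a - 1) (b - 1) c))
    = D a b c := by
  have H1 := he' D hd0 hd1 hd2 a b c
  have H2 := hF1 D hd0 hd1 hd2 a b c
  have H3 := hF1 D hd0 hd1 hd2 (a-1) b c
  have H4 := hF2 D hd0 hd1 hd2 a b c
  have H5 := hF2 D hd0 hd1 hd2 (a-1) b c
  have H6 := hh_def D hd0 hd1 hd2 a b c
  have H7 := hh_def D hd0 hd1 hd2 (a-1) b c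
  have H8 := hg D hd0 hd1 hd2 a b c
  have H9 := Dp_def D hd0 hd1 hd2 a b c
  have T1 := two_mul_z (if a = 0 then rr D b c else 0)
  have T2 := two_mul_z (if c = 0 then ss D a b else 0)
  have T3 := two_mul_z (if c = 0 then ss D (a-1) b else 0)
  linear_combination H1 + H2 + H3 + H4 + H5 + H6 + H7 + H8 + H9 + T1 + T2 + T3


omit hd0 hd1 hd2

def Emk (D : ZMod L → ZMod L → ZMod L → ZMod 2) : V L × Fin 3 → ZMod 2 := fun q =>
  if q.2 = 0 then (if q.1 0 = 0 then ee D (q.1 1) (q.1 2) else 0)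
  else if q.2 = 1 then F1 D (q.1 0) (q.1 1) (q.1 2)
  else F2 D (q.1 0) (q.1 1) (q.1 2)

lemma vertSyn_Emk (D : ZMod L → ZMod L → ZMod L → ZMod 2)
    (hd0 : ∀ a, ∑ b : ZMod L, ∑ c : ZMod L, D a b c = 0)
    (hd1 : ∀ b, ∑ a : ZMod L, ∑ c : ZMod L, D a b c = 0)
    (hd2 : ∀ c, ∑ a : ZMod L, ∑ b : ZMod L, D a b c = 0)
    (v : V L) : vertSyn L (Emk D) v = D (v 0) (v 1) (v 2) := by
  have M := master D hd0 hd1 hd2 (v 0) (v 1) (v 2)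
  unfold vertSyn Emk
  simp only [oth, Fin.isValue, Matrix.cons_val_zero, Matrix.cons_val_one, Matrix.head_cons,
    Matrix.cons_val_two, Matrix.tail_cons, Fin.sum_univ_three, Fin.sum_univ_two,
    Fin.val_zero, Fin.val_one, Nat.cast_zero, Nat.cast_one, zero_smul, one_smul, sub_zero]
  simp only [Pi.sub_apply, e_apply,
    show ((0:Fin 3) = 0) = True from by decide,
    show ((0:Fin 3) = 1) = False from by decide,
    show ((0:Fin 3) = 2) = False from by decide,
    show ((1:Fin 3) = 0) = False from by decide,
    show ((1:Fin 3) = 1) = True from by decide,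
    show ((1:Fin 3) = 2) = False from by decide,
    show ((2:Fin 3) = 0) = False from by decide,
    show ((2:Fin 3) = 1) = False from by decide,
    show ((2:Fin 3) = 2) = True from by decide,
    if_true, if_false, sub_zero]
  linear_combination M

end Constr

lemma exists_E {L : ℕ} [NeZero L] (d : V L → ZMod 2)
    (hd : ∀ (i : Fin 3) (a : ZMod L),
      ∑ v ∈ Finset.univ.filter (fun v : V L => v i = a), d v = 0) :
    ∃ E : V L × Fin 3 → ZMod 2, vertSyn L E = d := by
  set D : ZMod L → ZMod L → ZMod L → ZMod 2 := fun a b c => d ![a, b, c] with hD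
  have hd0 : ∀ a, ∑ b : ZMod L, ∑ c : ZMod L, D a b c = 0 := fun a => by
    rw [← planeSum0 d a]; exact hd 0 a
  have hd1 : ∀ b, ∑ a : ZMod L, ∑ c : ZMod L, D a b c = 0 := fun b => by
    rw [← planeSum1 d b]; exact hd 1 b
  have hd2 : ∀ c, ∑ a : ZMod L, ∑ b : ZMod L, D a b c = 0 := fun c => by
    rw [← planeSum2 d c]; exact hd 2 c
  refine ⟨Constr.Emk D, funext fun v => ?_⟩
  rw [Constr.vertSyn_Emk D hd0 hd1 hd2 v]
  show d ![v 0, v 1, v 2] = d v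
  rw [eta3]

/-- plane-sum linear map -/
def Pmap (L : ℕ) [NeZero L] : (V L → ZMod 2) →ₗ[ZMod 2] (Fin 3 × ZMod L → ZMod 2) where
  toFun d := fun p => ∑ v ∈ Finset.univ.filter (fun v : V L => v p.1 = p.2), d v
  map_add' d d' := by funext p; simp [Finset.sum_add_distrib]
  map_smul' c d := by funext p; simp [Finset.mul_sum]

/-- total-sum comparison map -/
def Qmap (L : ℕ) [NeZero L] : (Fin 3 × ZMod L → ZMod 2) →ₗ[ZMod 2] (Fin 2 → ZMod 2) where
  toFun f := ![(∑ x : ZMod L, f (0, x)) + ∑ x : ZMod L, f (1, x),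
               (∑ x : ZMod L, f (1, x)) + ∑ x : ZMod L, f (2, x)]
  map_add' f g := by
    funext j; fin_cases j <;>
      simp [Finset.sum_add_distrib] <;> ring
  map_smul' c f := by
    funext j; fin_cases j <;>
      simp [Pi.smul_apply, smul_eq_mul, ← Finset.mul_sum, mul_add]

lemma range_vertSynMap (L : ℕ) [NeZero L] :
    LinearMap.range (vertSynMap L) = LinearMap.ker (Pmap L) := by
  ext d
  constructor
  · rintro ⟨E, rfl⟩
    rw [LinearMap.mem_ker]
    funext p
    exact vertSyn_plane E p.1 p.2
  · intro hdm
    rw [LinearMap.mem_ker] at hdm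
    obtain ⟨E, hE⟩ := exists_E d (fun i a => congrFun hdm (i, a))
    exact ⟨E, hE⟩

lemma range_Pmap (L : ℕ) [NeZero L] :
    LinearMap.range (Pmap L) = LinearMap.ker (Qmap L) := by
  ext f
  constructor
  · rintro ⟨d, rfl⟩
    rw [LinearMap.mem_ker]
    have htot : ∀ i : Fin 3, ∑ x : ZMod L,
        ∑ v ∈ Finset.univ.filter (fun v : V L => v i = x), d v = ∑ v : V L, d v :=
      fun i => by rw [Finset.sum_fiberwise]
    have c0 : Qmap L (Pmap L d) 0 = 0 := by
      simp only [Qmap, Pmap, LinearMap.coe_mk, AddHom.coe_mk, Matrix.cons_val_zero]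
      rw [htot, htot]; exact two_mul_z _
    have c1 : Qmap L (Pmap L d) 1 = 0 := by
      simp only [Qmap, Pmap, LinearMap.coe_mk, AddHom.coe_mk, Matrix.cons_val_one,
        Matrix.head_cons]
      rw [htot, htot]; exact two_mul_z _
    funext j
    fin_cases j
    · exact c0
    · exact c1
  · intro hf
    rw [LinearMap.mem_ker] at hf
    have e01 : (∑ x : ZMod L, f (0, x)) + ∑ x : ZMod L, f (1, x) = 0 := by
      have := congrFun hf 0; simpa [Qmap] using this
    have e12 : (∑ x : ZMod L, f (1, x)) + ∑ x : ZMod L, f (2, x) = 0 := by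
      have := congrFun hf 1; simpa [Qmap] using this
    have e02 : (∑ x : ZMod L, f (0, x)) + ∑ x : ZMod L, f (2, x) = 0 := by
      linear_combination e01 + e12 - two_mul_z (∑ x : ZMod L, f (1, x))
    refine ⟨fun v => (if v 1 = 0 ∧ v 2 = 0 then f (0, v 0) else 0)
      + (if v 0 = 0 ∧ v 2 = 0 then f (1, v 1) else 0)
      + (if v 0 = 0 ∧ v 1 = 0 then f (2, v 2) else 0), ?_⟩
    have h0 : ∀ x : ZMod L, ∑ v ∈ Finset.univ.filter (fun v : V L => v 0 = x),
        ((if v 1 = 0 ∧ v 2 = 0 then f (0, v 0) else 0)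
          + (if v 0 = 0 ∧ v 2 = 0 then f (1, v 1) else 0)
          + (if v 0 = 0 ∧ v 1 = 0 then f (2, v 2) else 0)) = f (0, x) := by
      intro x
      rw [planeSum0]
      simp only [Matrix.cons_val_zero, Matrix.cons_val_one, Matrix.head_cons,
        Matrix.cons_val_two, Matrix.tail_cons]
      by_cases hx : x = 0 <;>
        simp [hx, Finset.sum_add_distrib, ite_and, Finset.sum_ite_eq', Finset.sum_ite_eq] <;>
        linear_combination e12
    have h1 : ∀ x : ZMod L, ∑ v ∈ Finset.univ.filter (fun v : V L => v 1 = x),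
        ((if v 1 = 0 ∧ v 2 = 0 then f (0, v 0) else 0)
          + (if v 0 = 0 ∧ v 2 = 0 then f (1, v 1) else 0)
          + (if v 0 = 0 ∧ v 1 = 0 then f (2, v 2) else 0)) = f (1, x) := by
      intro x
      rw [planeSum1]
      simp only [Matrix.cons_val_zero, Matrix.cons_val_one, Matrix.head_cons,
        Matrix.cons_val_two, Matrix.tail_cons]
      by_cases hx : x = 0 <;>
        simp [hx, Finset.sum_add_distrib, ite_and, Finset.sum_ite_eq', Finset.sum_ite_eq] <;>
        linear_combination e02
    have h2 : ∀ x : ZMod L, ∑ v ∈ Finset.univ.filter (fun v : V L => v 2 = x),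
        ((if v 1 = 0 ∧ v 2 = 0 then f (0, v 0) else 0)
          + (if v 0 = 0 ∧ v 2 = 0 then f (1, v 1) else 0)
          + (if v 0 = 0 ∧ v 1 = 0 then f (2, v 2) else 0)) = f (2, x) := by
      intro x
      rw [planeSum2]
      simp only [Matrix.cons_val_zero, Matrix.cons_val_one, Matrix.head_cons,
        Matrix.cons_val_two, Matrix.tail_cons]
      by_cases hx : x = 0 <;>
        simp [hx, Finset.sum_add_distrib, ite_and, Finset.sum_ite_eq', Finset.sum_ite_eq] <;>
        linear_combination e01
    funext p
    obtain ⟨i, x⟩ := p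
    fin_cases i
    · exact h0 x
    · exact h1 x
    · exact h2 x
lemma Qmap_surjective (L : ℕ) [NeZero L] : Function.Surjective (Qmap L) := by
  intro g
  refine ⟨fun p => if p.2 = 0 then ![g 0, 0, g 1] p.1 else 0, ?_⟩
  funext j
  fin_cases j <;>
    simp [Qmap, Finset.sum_ite_eq', Finset.mem_univ]


/-- The vertex syndrome map has rank `L³ − 3L + 2`, and its image is exactly
the subspace of configurations whose sum over every axis-aligned lattice plane
vanishes. -/
theorem stmt_14 (L : ℕ) [NeZero L] (hL : 2 ≤ L) :
    Module.finrank (ZMod 2) (LinearMap.range (vertSynMap L)) = L ^ 3 - 3 * L + 2 ∧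
    ∀ d : V L → ZMod 2, d ∈ LinearMap.range (vertSynMap L) ↔
      ∀ (i : Fin 3) (a : ZMod L),
        ∑ v ∈ Finset.univ.filter (fun v : V L => v i = a), d v = 0 := by
  have hrange := range_vertSynMap L
  constructor
  · have hrp := range_Pmap L
    have hQtop : LinearMap.range (Qmap L) = ⊤ :=
      LinearMap.range_eq_top.2 (Qmap_surjective L)
    have rn_q := LinearMap.finrank_range_add_finrank_ker (Qmap L)
    have rn_p := LinearMap.finrank_range_add_finrank_ker (Pmap L)
    have hdom_q : Module.finrank (ZMod 2) (Fin 3 × ZMod L → ZMod 2) = 3 * L := by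
      rw [Module.finrank_pi]
      simp [Fintype.card_prod, ZMod.card]
    have htarget_q : Module.finrank (ZMod 2) (Fin 2 → ZMod 2) = 2 := by
      rw [Module.finrank_pi]; simp
    have hrank_q : Module.finrank (ZMod 2) (LinearMap.range (Qmap L)) = 2 := by
      rw [hQtop, finrank_top, htarget_q]
    have hker_q : Module.finrank (ZMod 2) (LinearMap.ker (Qmap L)) = 3 * L - 2 := by
      rw [hdom_q, hrank_q] at rn_q
      omega
    have hdom_p : Module.finrank (ZMod 2) (V L → ZMod 2) = L ^ 3 := by
      rw [Module.finrank_pi]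
      simp [Fintype.card_fun, ZMod.card]
    have hrank_p : Module.finrank (ZMod 2) (LinearMap.range (Pmap L)) = 3 * L - 2 := by
      rw [hrp, hker_q]
    have h3 : 3 * L ≤ L ^ 3 := by
      calc 3 * L ≤ (L * L) * L :=
            Nat.mul_le_mul_right L (le_trans (by norm_num) (Nat.mul_le_mul hL hL))
        _ = L ^ 3 := by ring
    rw [hrange]
    rw [hdom_p, hrank_p] at rn_p
    omega
  · intro d
    rw [hrange, LinearMap.mem_ker]
    constructor
    · intro h i a
      exact congrFun h (i, a)
    · intro h
      funext p
      exact h p.1 p.2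
end

section
/- Let L ≥ 2, let v, w ∈ V be vertices whose third coordinates agree (v₂ = w₂), and let k ∈ ZMod L. Then there exists a Z-error E whose vertex syndrome σ_A(E) equals the pointwise ZMod 2 sum of indicator functions 𝟙{v} + 𝟙{w} + 𝟙{v + k·e₂} + 𝟙{w + k·e₂}. (A pair of fracton defects lying in a common constant-z lattice plane forms a planon that can be translated freely in the z direction by a Pauli-Z operator; this is the defect-movement step used in the planeon neutralization procedure.) -/
/-!
The vertex syndrome is additive, and a single face has as syndrome the indicator of its four
corners. Corner indicators of parallelograms `p, p + a, p + b, p + a + b` glue along common edges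
(shared corners cancel mod 2), so faces of one color tile any rectangle spanned by multiples of the
two other lattice directions. As `v` and `w` differ only in the `x` and `y` directions, the four
defects are the corners of the parallelogram spanned by `w - v` and `k • e₂`, which splits into an
`xz`-rectangle of color-1 faces and a `yz`-rectangle of color-0 faces.
-/

section Corners

variable {G : Type*} [AddCommGroup G] [DecidableEq G]

def corners (p a b : G) : G → ZMod 2 := fun u =>
  (if u = p then 1 else 0) + (if u = p + a then 1 else 0) +
  (if u = p + b then 1 else 0) + (if u = p + a + b then 1 else 0)

lemma corners_comm (p a b : G) : corners p a b = corners p b a := by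
  funext u
  simp only [corners, add_right_comm p a b]
  ring

lemma corners_zero_left (p b : G) : corners p 0 b = 0 := by
  funext u
  simp only [corners, add_zero, Pi.zero_apply]
  linear_combination CharTwo.add_self_eq_zero (if u = p then (1 : ZMod 2) else 0) +
    CharTwo.add_self_eq_zero (if u = p + b then (1 : ZMod 2) else 0)

lemma corners_add_left (p a a' b : G) :
    corners p (a + a') b = corners p a b + corners (p + a) a' b := by
  funext u
  simp only [corners, Pi.add_apply, ← add_assoc]
  linear_combination -CharTwo.add_self_eq_zero (if u = p + a then (1 : ZMod 2) else 0) -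
    CharTwo.add_self_eq_zero (if u = p + a + b then (1 : ZMod 2) else 0)

lemma corners_neg_left (p a b : G) : corners p (-a) b = corners (p - a) a b := by
  funext u
  simp only [corners, sub_add_cancel, ← sub_eq_add_neg, sub_add_eq_add_sub]
  ring

lemma corners_zsmul_left_mem {S : AddSubgroup (G → ZMod 2)} {a b : G}
    (h : ∀ p, corners p a b ∈ S) (n : ℤ) (p : G) : corners p (n • a) b ∈ S := by
  induction n using Int.induction_on generalizing p with
  | zero => simpa only [zero_smul, corners_zero_left] using S.zero_mem
  | succ n ih => rw [add_smul, one_smul, corners_add_left]; exact S.add_mem (ih p) (h _)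
  | pred n ih =>
    rw [sub_smul, one_smul, sub_eq_add_neg, corners_add_left, corners_neg_left]
    exact S.add_mem (ih p) (h _)

lemma corners_zsmul_zsmul_mem {S : AddSubgroup (G → ZMod 2)} {a b : G}
    (h : ∀ p, corners p a b ∈ S) (m n : ℤ) (p : G) : corners p (m • a) (n • b) ∈ S := by
  rw [corners_comm]
  refine corners_zsmul_left_mem (fun q => ?_) n p
  rw [corners_comm]
  exact corners_zsmul_left_mem h m q

end Corners

def vertSynHom (L : ℕ) : (V L × Fin 3 → ZMod 2) →+ (V L → ZMod 2) :=
  AddMonoidHom.mk' (vertSyn L) fun E F => by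
    funext u
    simp [vertSyn, Finset.sum_add_distrib]

lemma vertSyn_single (L : ℕ) (p : V L) (i : Fin 3) :
    vertSyn L (Pi.single (p, i) 1) = corners p (e L (oth i).1) (e L (oth i).2) := by
  funext u
  simp only [vertSyn, corners, Fin.sum_univ_three, Fin.sum_univ_two, Pi.single_apply, Prod.mk.injEq]
  -- `ring!`: the sums in the two sides go through different instance paths of `+` on `V L`
  fin_cases i <;> simp [oth, sub_sub, sub_eq_iff_eq_add, add_comm, add_left_comm] <;> ring!

lemma corners_mem_range_vertSynHom (L : ℕ) (p : V L) (i : Fin 3) (c d : ZMod L) :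
    corners p (c • e L (oth i).1) (d • e L (oth i).2) ∈ (vertSynHom L).range := by
  rw [← ZMod.intCast_zmod_cast c, ← ZMod.intCast_zmod_cast d, Int.cast_smul_eq_zsmul,
    Int.cast_smul_eq_zsmul]
  exact corners_zsmul_zsmul_mem
    (fun q => AddMonoidHom.mem_range.mpr ⟨_, vertSyn_single L q i⟩) _ _ p

theorem stmt_18_general (L : ℕ) (v w : V L)
    (hvw : v 2 = w 2) (k : ZMod L) :
    ∃ E : V L × Fin 3 → ZMod 2, vertSyn L E = fun u : V L =>
      (if u = v then 1 else 0) + (if u = w then 1 else 0) +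
      (if u = v + k • e L 2 then 1 else 0) + (if u = w + k • e L 2 then 1 else 0) := by
  have hwv : w - v = (w 0 - v 0) • e L 0 + (w 1 - v 1) • e L 1 := by
    funext j
    fin_cases j <;> simp [e, hvw]
  have hmem : corners v (w - v) (k • e L 2) ∈ (vertSynHom L).range := by
    rw [hwv, corners_add_left]
    exact AddSubgroup.add_mem _ (corners_mem_range_vertSynHom L v 1 _ k)
      (corners_mem_range_vertSynHom L _ 0 _ k)
  obtain ⟨E, hE⟩ := hmem
  refine ⟨E, hE.trans ?_⟩
  funext u
  simp only [corners, add_sub_cancel]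

/-- A pair of fracton defects in a common constant-`z` plane forms a planon
that can be translated freely in the `z` direction by a Pauli-Z operator. -/
theorem stmt_18 (L : ℕ) [NeZero L] (hL : 2 ≤ L) (v w : V L)
    (hvw : v 2 = w 2) (k : ZMod L) :
    ∃ E : V L × Fin 3 → ZMod 2, vertSyn L E = fun u : V L =>
      (if u = v then 1 else 0) + (if u = w then 1 else 0) +
      (if u = v + k • e L 2 then 1 else 0) + (if u = w + k • e L 2 then 1 else 0) :=
  stmt_18_general L v w hvw k
end
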